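/- arXiv:2409.02939 — 10 statements merged into one kernel-verified Lean document; each statement's English description precedes it below -/
import Mathlib

section
/- Let (X,r) be a left nondegenerate idempotent quadratic set with X finite of cardinality n. Then X × X has exactly n r-orbits, and every r-orbit contains exactly n elements. -/
/-- The `r`-orbit equivalence on `X × X`: the equivalence relation generated by
relating `p` to `r p`. -/
def rOrbitRel {X : Type*} (r : X × X → X × X) : X × X → X × X → Prop :=
  Relation.EqvGen (fun p q => r p = q)

theorem rOrbitRel_iff {X : Type*} (r : X × X → X × X) (hidem : r ∘ r = r)
    (p q : X × X) : rOrbitRel r p q ↔ r p = r q := by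
  have hfix : ∀ u, r (r u) = r u := fun u => congrFun hidem u
  constructor
  · intro h
    induction h with
    | rel a b hab => subst hab; exact (hfix a).symm
    | refl a => rfl
    | symm a b _ ih => exact ih.symm
    | trans a b c _ _ ih1 ih2 => exact ih1.trans ih2
  · intro h
    exact Relation.EqvGen.trans _ _ _ (Relation.EqvGen.rel p (r p) rfl)
      (h ▸ Relation.EqvGen.symm _ _ (Relation.EqvGen.rel q (r q) rfl))

theorem fixed_eq_of_fst_eq {X : Type*} (r : X × X → X × X)
    (hlnd : ∀ x : X, Function.Bijective fun y => (r (x, y)).1)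
    (u v : X × X) (hu : r u = u) (hv : r v = v) (h1 : u.1 = v.1) : u = v := by
  have h2 : u.2 = v.2 := by
    apply (hlnd u.1).1
    show (r (u.1, u.2)).1 = (r (u.1, v.2)).1
    rw [Prod.mk.eta, hu, h1, Prod.mk.eta, hv]
  exact Prod.ext h1 h2

/-- Let `(X, r)` be a left nondegenerate idempotent quadratic set with `X` finite of
cardinality `n`. Then `X × X` has exactly `n` `r`-orbits (the quotient of `X × X` by the
relation `p ↦ r p` has exactly `n` elements), and every `r`-orbit has exactly `n`
elements. -/
theorem stmt4 {X : Type*} [Finite X] (r : X × X → X × X)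
    (hlnd : ∀ x : X, Function.Bijective fun y => (r (x, y)).1)
    (hidem : r ∘ r = r) :
    Nat.card (Quot (fun p q : X × X => r p = q)) = Nat.card X ∧
    ∀ p : X × X, Nat.card {q : X × X // rOrbitRel r p q} = Nat.card X := by
  have hfix : ∀ u, r (r u) = r u := fun u => congrFun hidem u
  constructor
  · -- quotient ≃ X via p ↦ (r p).1
    have hlift : ∀ p q : X × X, r p = q → (r p).1 = (r q).1 := by
      intro p q h; subst h; rw [hfix]
    refine Nat.card_eq_of_bijective (Quot.lift (fun p => (r p).1) hlift) ⟨?_, ?_⟩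
    · intro a b
      induction a using Quot.ind with | _ p =>
      induction b using Quot.ind with | _ q =>
      intro h
      have : r p = r q :=
        fixed_eq_of_fst_eq r hlnd (r p) (r q) (hfix p) (hfix q) h
      exact Quot.eqvGen_sound ((rOrbitRel_iff r hidem p q).mpr this)
    · intro a
      obtain ⟨y, hy⟩ := (hlnd a).2 a
      exact ⟨Quot.mk _ (a, y), hy⟩
  · intro p
    refine Nat.card_eq_of_bijective (fun q => q.1.1) ⟨?_, ?_⟩
    · rintro ⟨q1, h1⟩ ⟨q2, h2⟩ h
      have e1 : r p = r q1 := (rOrbitRel_iff r hidem p q1).mp h1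
      have e2 : r p = r q2 := (rOrbitRel_iff r hidem p q2).mp h2
      have h' : q1.1 = q2.1 := h
      have h2' : q1.2 = q2.2 := by
        apply (hlnd q1.1).1
        show (r (q1.1, q1.2)).1 = (r (q1.1, q2.2)).1
        rw [Prod.mk.eta, h', Prod.mk.eta, ← e1, ← e2]
      exact Subtype.ext (Prod.ext h' h2')
    · intro x
      obtain ⟨y, hy⟩ := (hlnd x).2 ((r p).1)
      have : r (x, y) = r p :=
        fixed_eq_of_fst_eq r hlnd (r (x, y)) (r p) (hfix _) (hfix _) hy
      exact ⟨⟨(x, y), (rOrbitRel_iff r hidem p (x, y)).mpr this.symm⟩, rfl⟩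
end

section
/- Let (X,r) be a left nondegenerate idempotent braided set with X finite of cardinality n ≥ 2, and fix an element x₁ ∈ X. Then for every d ≥ 1 and every word w of length d in the free monoid on X, there is a unique x ∈ X such that [w] = [x₁^{d−1}x] in the Yang–Baxter monoid S(X,r). Consequently, for every d ≥ 1 the set S_d of classes of words of length d has exactly n elements, and for any field k the Yang–Baxter algebra A(k,X,r) has Hilbert function dim_k A_d = n for all d ≥ 1, i.e., Hilbert series (1 + (n−1)t)/(1−t). -/
/-- `r` applied to the first two factors of `X × X × X`. -/
def rOneMap {X : Type*} (r : X × X → X × X) : X × X × X → X × X × X :=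
  fun p => ((r (p.1, p.2.1)).1, (r (p.1, p.2.1)).2, p.2.2)

/-- `r` applied to the last two factors of `X × X × X`. -/
def rTwoMap {X : Type*} (r : X × X → X × X) : X × X × X → X × X × X :=
  fun p => (p.1, (r (p.2.1, p.2.2)).1, (r (p.2.1, p.2.2)).2)

/-- `(X, r)` is a braided set (set-theoretic solution of the Yang–Baxter equation). -/
def IsBraided {X : Type*} (r : X × X → X × X) : Prop :=
  rOneMap r ∘ rTwoMap r ∘ rOneMap r = rTwoMap r ∘ rOneMap r ∘ rTwoMap r

/-- The defining relations of the Yang–Baxter monoid: `xy ~ x'y'` whenever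
`r (x, y) = (x', y')`. -/
def ybRel {X : Type*} (r : X × X → X × X) : FreeMonoid X → FreeMonoid X → Prop :=
  fun a b => ∃ x y : X,
    a = FreeMonoid.of x * FreeMonoid.of y ∧
    b = FreeMonoid.of (r (x, y)).1 * FreeMonoid.of (r (x, y)).2

/-- The congruence on the free monoid on `X` generated by the Yang–Baxter relations;
the Yang–Baxter monoid `S(X, r)` is its quotient. -/
def ybCon {X : Type*} (r : X × X → X × X) : Con (FreeMonoid X) := conGen (ybRel r)

/-!
If `λ_{x₁} t = y ▷ z`, idempotence forces `r (x₁, t) = r (y, z)`, so `yz = x₁t` in `S(X, r)`;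
reading a word from left to right, each new letter is absorbed into a prefix `x₁^d y` as
`x₁^d y a = x₁^(d+1) t`, so every word of length `d + 1` equals some `x₁^d x`.
For uniqueness, the braid relation and idempotence make `a₁ ⋯ aₘ ↦ λ_{a₁} ⋯ λ_{aₘ₋₁} aₘ`
an invariant of `S(X, r)`; on `x₁^d x` it is `λ_{x₁}^d x`, which determines `x`. The counts
follow because distinct elements of a monoid are linearly independent in its monoid algebra.
-/

theorem FreeMonoid.length_pow {α : Type*} (a : FreeMonoid α) (e : ℕ) :
    (a ^ e).length = e * a.length := by
  induction e with
  | zero => simp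
  | succ e ih => rw [pow_succ, length_mul, ih, Nat.succ_mul]

theorem MonoidAlgebra.finrank_span_image_of {k M : Type*} [Semiring k] [StrongRankCondition k]
    [Monoid M] (T : Set M) :
    Module.finrank k (Submodule.span k (MonoidAlgebra.of k M '' T)) = Nat.card T := by
  have := nontrivial_of_invariantBasisNumber k
  have hli : LinearIndepOn k id (MonoidAlgebra.of k M '' T) :=
    ((MonoidAlgebra.basis M k).linearIndependent.linearIndepOn T).id_image
  rw [Module.finrank, rank_span_set hli]
  exact Nat.card_image_of_injective MonoidAlgebra.of_injective T

namespace IsBraided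

variable {X : Type*} {r : X × X → X × X}

theorem leftAction_comp (hbr : IsBraided r) (x y z : X) :
    (r (x, (r (y, z)).1)).1 = (r ((r (x, y)).1, (r ((r (x, y)).2, z)).1)).1 :=
  (congrArg Prod.fst (congrFun hbr (x, y, z))).symm

end IsBraided

section YangBaxterMonoid

variable {X : Type*} {r : X × X → X × X}

theorem ybCon_mk'_of_mul_of (x y : X) :
    (ybCon r).mk' (FreeMonoid.of x * FreeMonoid.of y)
      = (ybCon r).mk' (FreeMonoid.of (r (x, y)).1 * FreeMonoid.of (r (x, y)).2) :=
  (ybCon r).eq.mpr (ConGen.Rel.of _ _ ⟨x, y, rfl, rfl⟩)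

theorem eq_of_fst_eq_of_idempotent (hinj : ∀ x : X, Function.Injective fun y => (r (x, y)).1)
    (hidem : r ∘ r = r) {p q : X × X} (h : (r p).1 = (r q).1) : r p = r q := by
  have hp : (r ((r p).1, (r p).2)).1 = (r p).1 := congrArg Prod.fst (congrFun hidem p)
  have hq : (r ((r q).1, (r q).2)).1 = (r q).1 := congrArg Prod.fst (congrFun hidem q)
  refine Prod.ext h (hinj (r p).1 ?_)
  calc (r ((r p).1, (r p).2)).1 = (r q).1 := hp.trans h
    _ = (r ((r p).1, (r q).2)).1 := by rw [h, hq]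

variable (r) in
/-- A word `a₁ ⋯ aₘ` sends `some y` to `some (λ_{a₁} ⋯ λ_{aₘ} y)` and `none` to
`some (λ_{a₁} ⋯ λ_{aₘ₋₁} aₘ)`, where `λ_x y = (r (x, y)).1`. -/
def ybOptionAction : FreeMonoid X →* Function.End (Option X) :=
  FreeMonoid.lift fun x o => some (o.elim x fun y => (r (x, y)).1)

theorem ybCon_le_ker_ybOptionAction (hbr : IsBraided r) (hidem : r ∘ r = r) :
    ybCon r ≤ Con.ker (ybOptionAction r) := by
  refine Con.conGen_le.mpr ?_
  rintro _ _ ⟨x, y, rfl, rfl⟩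
  show ybOptionAction r _ = ybOptionAction r _
  rw [map_mul, map_mul]
  funext o
  cases o with
  | none => exact congrArg some (congrArg Prod.fst (congrFun hidem (x, y))).symm
  | some z => exact congrArg some (hbr.leftAction_comp x y z)

theorem ybOptionAction_pow_mul_of_none (x₁ x : X) (e : ℕ) :
    ybOptionAction r (FreeMonoid.of x₁ ^ e * FreeMonoid.of x) none
      = some ((fun y => (r (x₁, y)).1)^[e] x) := by
  have hsemi : Function.Semiconj some (fun y => (r (x₁, y)).1)
      (ybOptionAction r (FreeMonoid.of x₁)) := fun _ => rfl
  rw [map_mul, map_pow]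
  exact (hsemi.iterate_right e x).symm

theorem eq_of_mk'_pow_mul_of_eq (hbr : IsBraided r) (hidem : r ∘ r = r) {x₁ x y : X}
    (hinj : Function.Injective fun y => (r (x₁, y)).1) {e : ℕ}
    (h : (ybCon r).mk' (FreeMonoid.of x₁ ^ e * FreeMonoid.of x)
      = (ybCon r).mk' (FreeMonoid.of x₁ ^ e * FreeMonoid.of y)) : x = y := by
  have hker := congrFun (ybCon_le_ker_ybOptionAction hbr hidem ((ybCon r).eq.mp h)) none
  rw [ybOptionAction_pow_mul_of_none, ybOptionAction_pow_mul_of_none] at hker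
  exact (hinj.iterate e) (Option.some_injective _ hker)

theorem exists_mk'_of_mul_of_eq (hlnd : ∀ x : X, Function.Bijective fun y => (r (x, y)).1)
    (hidem : r ∘ r = r) (x₁ y z : X) :
    ∃ t, (ybCon r).mk' (FreeMonoid.of y * FreeMonoid.of z)
      = (ybCon r).mk' (FreeMonoid.of x₁ * FreeMonoid.of t) := by
  obtain ⟨t, ht⟩ := (hlnd x₁).2 (r (y, z)).1
  refine ⟨t, ?_⟩
  rw [ybCon_mk'_of_mul_of, ybCon_mk'_of_mul_of x₁, eq_of_fst_eq_of_idempotent (fun x => (hlnd x).1) hidem ht]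

theorem exists_mk'_mul_of_eq_pow_mul_of
    (hlnd : ∀ x : X, Function.Bijective fun y => (r (x, y)).1) (hidem : r ∘ r = r) (x₁ : X)
    (l : List X) (a : X) :
    ∃ x, (ybCon r).mk' (FreeMonoid.ofList l * FreeMonoid.of a)
      = (ybCon r).mk' (FreeMonoid.of x₁ ^ l.length * FreeMonoid.of x) := by
  induction l using List.reverseRecOn generalizing a with
  | nil => exact ⟨a, by simp⟩
  | append_singleton l b ih =>
    obtain ⟨y, hy⟩ := ih b
    obtain ⟨x, hx⟩ := exists_mk'_of_mul_of_eq hlnd hidem x₁ y a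
    refine ⟨x, ?_⟩
    simp only [FreeMonoid.ofList_append, FreeMonoid.ofList_singleton, map_mul] at hy ⊢
    rw [hy, mul_assoc, ← map_mul, hx, List.length_append, List.length_singleton, pow_succ]
    simp only [map_mul, mul_assoc]

theorem exists_mk'_eq_pow_mul_of
    (hlnd : ∀ x : X, Function.Bijective fun y => (r (x, y)).1) (hidem : r ∘ r = r) (x₁ : X)
    {d : ℕ} {w : FreeMonoid X} (hw : w.length = d + 1) :
    ∃ x, (ybCon r).mk' w = (ybCon r).mk' (FreeMonoid.of x₁ ^ d * FreeMonoid.of x) := by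
  obtain ⟨l, a, hla⟩ : ∃ l a, w.toList = l ++ [a] := by
    rcases List.eq_nil_or_concat' w.toList with hnil | hcons
    · simp [FreeMonoid.length, hnil] at hw
    · exact hcons
  have hl : l.length = d := by
    simpa [FreeMonoid.length, hla] using hw
  rw [← FreeMonoid.ofList_toList w, hla, FreeMonoid.ofList_append, FreeMonoid.ofList_singleton,
    ← hl]
  exact exists_mk'_mul_of_eq_pow_mul_of hlnd hidem x₁ l a

theorem bijective_mk'_pow_mul_of (hbr : IsBraided r)
    (hlnd : ∀ x : X, Function.Bijective fun y => (r (x, y)).1) (hidem : r ∘ r = r)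
    (x₁ : X) (d : ℕ) :
    Function.Bijective fun x : X =>
      (⟨(ybCon r).mk' (FreeMonoid.of x₁ ^ d * FreeMonoid.of x),
        FreeMonoid.of x₁ ^ d * FreeMonoid.of x, by simp [FreeMonoid.length_pow], rfl⟩ :
        {s : (ybCon r).Quotient // ∃ w : FreeMonoid X, w.length = d + 1 ∧ (ybCon r).mk' w = s}) :=
  ⟨fun _ _ h => eq_of_mk'_pow_mul_of_eq hbr hidem (hlnd x₁).1 (congrArg Subtype.val h),
    fun ⟨_, _, hw, hs⟩ =>
      (exists_mk'_eq_pow_mul_of hlnd hidem x₁ hw).imp fun _ hx => Subtype.ext (hs ▸ hx).symm⟩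

end YangBaxterMonoid

theorem stmt6_general {X : Type*} (r : X × X → X × X)
    (hbr : IsBraided r)
    (hlnd : ∀ x : X, Function.Bijective fun y => (r (x, y)).1)
    (hidem : r ∘ r = r)
    (n : ℕ) (hcard : Nat.card X = n) (x₁ : X)
    (k : Type*) [Field k] :
    (∀ d : ℕ, 1 ≤ d → ∀ w : FreeMonoid X, w.length = d →
      ∃! x : X, (ybCon r).mk' w
        = (ybCon r).mk' (FreeMonoid.of x₁ ^ (d - 1) * FreeMonoid.of x)) ∧
    (∀ d : ℕ, 1 ≤ d →
      Nat.card {s : (ybCon r).Quotient //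
        ∃ w : FreeMonoid X, w.length = d ∧ (ybCon r).mk' w = s} = n) ∧
    (∀ d : ℕ, 1 ≤ d →
      Module.finrank k (Submodule.span k
        {a : MonoidAlgebra k (ybCon r).Quotient |
          ∃ w : FreeMonoid X, w.length = d ∧
            a = MonoidAlgebra.of k (ybCon r).Quotient ((ybCon r).mk' w)}) = n) := by
  have hdegree : ∀ d : ℕ, 1 ≤ d →
      Nat.card {s : (ybCon r).Quotient //
        ∃ w : FreeMonoid X, w.length = d ∧ (ybCon r).mk' w = s} = n := by
    intro d hd
    obtain ⟨d, rfl⟩ := Nat.exists_eq_add_of_le' hd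
    rw [← hcard]
    exact (Nat.card_eq_of_bijective _ (bijective_mk'_pow_mul_of hbr hlnd hidem x₁ d)).symm
  refine ⟨?_, hdegree, ?_⟩
  · intro d hd w hw
    obtain ⟨d, rfl⟩ := Nat.exists_eq_add_of_le' hd
    obtain ⟨x, hx⟩ := exists_mk'_eq_pow_mul_of hlnd hidem x₁ hw
    rw [Nat.add_sub_cancel]
    exact ⟨x, hx, fun y hy => eq_of_mk'_pow_mul_of_eq hbr hidem (hlnd x₁).1 (hy.symm.trans hx)⟩
  · intro d hd
    have himage : {a : MonoidAlgebra k (ybCon r).Quotient |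
          ∃ w : FreeMonoid X, w.length = d ∧
            a = MonoidAlgebra.of k (ybCon r).Quotient ((ybCon r).mk' w)}
        = MonoidAlgebra.of k _ '' {s | ∃ w : FreeMonoid X, w.length = d ∧ (ybCon r).mk' w = s} :=
      Set.ext fun _ => ⟨fun ⟨w, hw, ha⟩ => ⟨_, ⟨w, hw, rfl⟩, ha.symm⟩,
        fun ⟨_, ⟨w, hw, hs⟩, ha⟩ => ⟨w, hw, hs ▸ ha.symm⟩⟩
    rw [himage, MonoidAlgebra.finrank_span_image_of]
    exact hdegree d hd

/-- Let `(X, r)` be a finite left nondegenerate idempotent braided set with `|X| = n ≥ 2`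
and `x₁ ∈ X`. Then for every `d ≥ 1`, every word of length `d` equals `x₁^(d-1) x` in
`S(X, r)` for a unique `x ∈ X`; hence the set `S_d` of classes of words of length `d` has
exactly `n` elements, and the degree-`d` component of the Yang–Baxter algebra
`A(k, X, r)` has dimension `n` over `k` for all `d ≥ 1` (i.e. its Hilbert series is
`(1 + (n-1)t)/(1-t)`). -/
theorem stmt6 {X : Type*} [Finite X] (r : X × X → X × X)
    (hbr : IsBraided r)
    (hlnd : ∀ x : X, Function.Bijective fun y => (r (x, y)).1)
    (hidem : r ∘ r = r)
    (n : ℕ) (hn : 2 ≤ n) (hcard : Nat.card X = n) (x₁ : X)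
    (k : Type*) [Field k] :
    (∀ d : ℕ, 1 ≤ d → ∀ w : FreeMonoid X, w.length = d →
      ∃! x : X, (ybCon r).mk' w
        = (ybCon r).mk' (FreeMonoid.of x₁ ^ (d - 1) * FreeMonoid.of x)) ∧
    (∀ d : ℕ, 1 ≤ d →
      Nat.card {s : (ybCon r).Quotient //
        ∃ w : FreeMonoid X, w.length = d ∧ (ybCon r).mk' w = s} = n) ∧
    (∀ d : ℕ, 1 ≤ d →
      Module.finrank k (Submodule.span k
        {a : MonoidAlgebra k (ybCon r).Quotient |
          ∃ w : FreeMonoid X, w.length = d ∧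
            a = MonoidAlgebra.of k (ybCon r).Quotient ((ybCon r).mk' w)}) = n) :=
  stmt6_general r hbr hlnd hidem n hcard x₁ k
end

section
/- Let (X,r) be a left nondegenerate idempotent braided set with X = {x₁,…,x_n} finite, n ≥ 2, and let k be a field. Let A = k[S(X,r)] be the Yang–Baxter algebra, regarded as a left module over the polynomial ring k[t] via the algebra homomorphism k[t] → A sending t to the class [x₁]. Then A is a free left k[t]-module of rank n, with basis (1, [x₂], …, [x_n]). -/
/-!
In an idempotent left nondegenerate braided set, `r (x, y)` is determined by `x ▷ y`, and by the
braid relation so is the composite `(x ▷ ·) ∘ (y ▷ ·)`. Fix a letter `q`. For every `s x` there is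
a letter `z` with `q ▷ z = s ▷ x`, hence `s x = q z` in `S(X, r)`, and so every element of
`S(X, r)` is `q ^ a` or `q ^ a * z`. These normal forms are pairwise distinct: the length is
invariant, and so is the last letter `z`, computed by reading a word through `(s, x) ↦ z`, which
respects the relations by the braid relation again. So `(a, x) ↦ q ^ a * bₓ` with `b_q = 1` and
`bₓ = x` otherwise is a bijection `ℕ × X ≃ S(X, r)`, and `k[S(X, r)]` is free over `k[q]` on the
`bₓ`.
-/

section

open Function Polynomial PresentedMonoid

theorem MonoidAlgebra.bijective_sum_aeval_mul_of {k M ι : Type*} [CommSemiring k] [Monoid M]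
    [Fintype ι] (t : M) (b : ι → M) (hb : Bijective fun p : ℕ × ι => t ^ p.1 * b p.2) :
    Bijective fun g : ι → k[X] => ∑ i, aeval (of k M t) (g i) * of k M (b i) := by
  classical
  let L : (ι → k[X]) →ₗ[k] MonoidAlgebra k M :=
    ∑ i, LinearMap.mulRight k (of k M (b i)) ∘ₗ (aeval (of k M t)).toLinearMap ∘ₗ LinearMap.proj i
  let σ : (Σ _ : ι, ℕ) ≃ M :=
    (Equiv.sigmaEquivProd ι ℕ).trans ((Equiv.prodComm ι ℕ).trans (Equiv.ofBijective _ hb))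
  let b₁ := Pi.basis fun _ : ι => basisMonomials k
  have hL : L = (b₁.equiv (MonoidAlgebra.basis M k) σ).toLinearMap := by
    refine b₁.ext fun ⟨i, a⟩ => ?_
    rw [LinearEquiv.coe_coe, Module.Basis.equiv_apply]
    simp [L, b₁, σ, Pi.basis_apply, Pi.single_apply, apply_ite (aeval _), ite_mul,
      MonoidAlgebra.single_pow, MonoidAlgebra.single_mul_single]
  have hL_apply : ⇑L = fun g : ι → k[X] => ∑ i, aeval (of k M t) (g i) * of k M (b i) := by
    ext g
    simp [L]
  rw [← hL_apply, hL]
  exact (b₁.equiv _ σ).bijective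

variable {X : Type*} {r : X × X → X × X}

theorem IsBraided.fst_fst_eq (hbr : IsBraided r) (x y z : X) :
    (r ((r (x, y)).1, (r ((r (x, y)).2, z)).1)).1 = (r (x, (r (y, z)).1)).1 :=
  congrArg (fun t : X × X × X => t.1) (congrFun hbr (x, y, z))

theorem fst_r_r_eq (hidem : r ∘ r = r) (p : X × X) : (r ((r p).1, (r p).2)).1 = (r p).1 :=
  congrArg Prod.fst (congrFun hidem p)

theorem r_eq_of_fst_eq (hlnd : ∀ x : X, Bijective fun y => (r (x, y)).1) (hidem : r ∘ r = r)
    {p p' : X × X} (h : (r p).1 = (r p').1) : r p = r p' := by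
  refine Prod.ext h ((hlnd (r p).1).1 ?_)
  simp only
  rw [fst_r_r_eq hidem, h, fst_r_r_eq hidem]

theorem fst_r_fst_r_eq_of_fst_eq (hbr : IsBraided r)
    (hlnd : ∀ x : X, Bijective fun y => (r (x, y)).1) (hidem : r ∘ r = r) {x y x' y' : X}
    (h : (r (x, y)).1 = (r (x', y')).1) (z : X) :
    (r (x, (r (y, z)).1)).1 = (r (x', (r (y', z)).1)).1 := by
  rw [← hbr.fst_fst_eq x y z, ← hbr.fst_fst_eq x' y' z, r_eq_of_fst_eq hlnd hidem h]

/-- The letter `z` with `q ▷ z = s ▷ x`, so that `s x = q z` in `S(X, r)`. -/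
noncomputable def normalLetter (hlnd : ∀ x : X, Bijective fun y => (r (x, y)).1) (q s x : X) : X :=
  (Equiv.ofBijective _ (hlnd q)).symm (r (s, x)).1

section NormalLetter

variable (hlnd : ∀ x : X, Bijective fun y => (r (x, y)).1)

theorem fst_r_normalLetter (q s x : X) : (r (q, normalLetter hlnd q s x)).1 = (r (s, x)).1 :=
  (Equiv.ofBijective _ (hlnd q)).apply_symm_apply _

theorem normalLetter_self (q x : X) : normalLetter hlnd q q x = x :=
  Equiv.ofBijective_symm_apply_apply _ (hlnd q) x

theorem normalLetter_congr (q : X) {s x s' x' : X} (h : (r (s, x)).1 = (r (s', x')).1) :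
    normalLetter hlnd q s x = normalLetter hlnd q s' x' := by
  rw [normalLetter, normalLetter, h]

end NormalLetter

theorem normalLetter_normalLetter (hbr : IsBraided r)
    (hlnd : ∀ x : X, Bijective fun y => (r (x, y)).1) (hidem : r ∘ r = r) (q s x y : X) :
    normalLetter hlnd q (normalLetter hlnd q s x) y =
      normalLetter hlnd q (normalLetter hlnd q s (r (x, y)).1) (r (x, y)).2 := by
  refine normalLetter_congr hlnd q ((hlnd q).1 ?_)
  simp only
  rw [fst_r_fst_r_eq_of_fst_eq hbr hlnd hidem (fst_r_normalLetter hlnd q s x),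
    fst_r_fst_r_eq_of_fst_eq hbr hlnd hidem (fst_r_normalLetter hlnd q s _), fst_r_r_eq hidem]

theorem PresentedMonoid.of_mul_of_ybRel (x y : X) :
    of (ybRel r) x * of (ybRel r) y = of (ybRel r) (r (x, y)).1 * of (ybRel r) (r (x, y)).2 := by
  simp only [of, ← map_mul]
  exact mk_eq_mk_of_rel ⟨x, y, rfl, rfl⟩

theorem PresentedMonoid.of_mul_of_eq_of_mul_normalLetter
    (hlnd : ∀ x : X, Bijective fun y => (r (x, y)).1) (hidem : r ∘ r = r) (q x y : X) :
    of (ybRel r) x * of (ybRel r) y = of (ybRel r) q * of (ybRel r) (normalLetter hlnd q x y) := by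
  rw [of_mul_of_ybRel, of_mul_of_ybRel q,
    r_eq_of_fst_eq hlnd hidem (fst_r_normalLetter hlnd q x y).symm]

noncomputable def normalLetterHom (hbr : IsBraided r)
    (hlnd : ∀ x : X, Bijective fun y => (r (x, y)).1) (hidem : r ∘ r = r) (q : X) :
    PresentedMonoid (ybRel r) →* (Function.End X)ᵐᵒᵖ :=
  lift (fun x => .op fun s => normalLetter hlnd q s x) <| by
    rintro _ _ ⟨x, y, rfl, rfl⟩
    exact congrArg MulOpposite.op (funext fun s => normalLetter_normalLetter hbr hlnd hidem q s x y)

/-- If `w = q ^ m * z` then `lastLetter q w = z`. -/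
noncomputable def lastLetter (hbr : IsBraided r)
    (hlnd : ∀ x : X, Bijective fun y => (r (x, y)).1) (hidem : r ∘ r = r) (q : X)
    (w : PresentedMonoid (ybRel r)) : X :=
  (normalLetterHom hbr hlnd hidem q w).unop q

section LastLetter

variable (hbr : IsBraided r) (hlnd : ∀ x : X, Bijective fun y => (r (x, y)).1)
  (hidem : r ∘ r = r) (q : X)

theorem lastLetter_one : lastLetter hbr hlnd hidem q 1 = q := by
  simp only [lastLetter, map_one, MulOpposite.unop_one]
  rfl

theorem lastLetter_mul_of (w : PresentedMonoid (ybRel r)) (x : X) :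
    lastLetter hbr hlnd hidem q (w * of (ybRel r) x) =
      normalLetter hlnd q (lastLetter hbr hlnd hidem q w) x := by
  simp only [lastLetter, normalLetterHom, map_mul, lift_of, MulOpposite.unop_mul]
  rfl

theorem lastLetter_of_pow (a : ℕ) : lastLetter hbr hlnd hidem q (of (ybRel r) q ^ a) = q := by
  induction a with
  | zero => exact lastLetter_one hbr hlnd hidem q
  | succ a ih => rw [pow_succ, lastLetter_mul_of, ih, normalLetter_self]

end LastLetter

variable (r) in
def ybLength : PresentedMonoid (ybRel r) →* Multiplicative ℕ :=
  lift (fun _ => .ofAdd 1) <| by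
    rintro _ _ ⟨x, y, rfl, rfl⟩
    simp

theorem ybLength_of_pow (q : X) (a : ℕ) : ybLength r (of (ybRel r) q ^ a) = .ofAdd a := by
  simp [ybLength, ← ofAdd_nsmul]

section NormalForm

variable [DecidableEq X]

variable (r) in
def normalForm (q : X) (p : ℕ × X) : PresentedMonoid (ybRel r) :=
  of (ybRel r) q ^ p.1 * if p.2 = q then 1 else of (ybRel r) p.2

theorem lastLetter_normalForm (hbr : IsBraided r)
    (hlnd : ∀ x : X, Bijective fun y => (r (x, y)).1) (hidem : r ∘ r = r) (q : X) (p : ℕ × X) :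
    lastLetter hbr hlnd hidem q (normalForm r q p) = p.2 := by
  obtain ⟨a, x⟩ := p
  by_cases hx : x = q
  · simp only [normalForm, hx, if_true, mul_one, lastLetter_of_pow]
  · simp only [normalForm, hx, if_false, lastLetter_mul_of, lastLetter_of_pow, normalLetter_self]

theorem normalForm_injective (hbr : IsBraided r)
    (hlnd : ∀ x : X, Bijective fun y => (r (x, y)).1) (hidem : r ∘ r = r) (q : X) :
    Injective (normalForm r q) := by
  rintro ⟨a, x⟩ ⟨c, y⟩ h
  obtain rfl : x = y := by
    simpa only [lastLetter_normalForm] using congrArg (lastLetter hbr hlnd hidem q) h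
  have hlen := congrArg (ybLength r) h
  simp only [normalForm, map_mul, ybLength_of_pow, mul_left_inj,
    EmbeddingLike.apply_eq_iff_eq] at hlen
  rw [hlen]

theorem of_pow_mul_of_mem_range_normalForm (q : X) (a : ℕ) (z : X) :
    of (ybRel r) q ^ a * of (ybRel r) z ∈ Set.range (normalForm r q) := by
  by_cases hz : z = q
  · exact ⟨(a + 1, q), by simp [normalForm, hz, pow_succ]⟩
  · exact ⟨(a, z), by simp [normalForm, hz]⟩

theorem normalForm_surjective (hlnd : ∀ x : X, Bijective fun y => (r (x, y)).1)
    (hidem : r ∘ r = r) (q : X) : Surjective (normalForm r q) := by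
  intro w
  induction w using Submonoid.induction_of_closure_eq_top_right (closure_range_of _) with
  | one => exact ⟨(0, q), by simp [normalForm]⟩
  | mul_right _ _ hy hw =>
    obtain ⟨y, rfl⟩ := hy
    obtain ⟨⟨a, x⟩, rfl⟩ := hw
    by_cases hx : x = q
    · simpa [normalForm, hx] using of_pow_mul_of_mem_range_normalForm q a y
    · rw [normalForm, if_neg hx, mul_assoc, of_mul_of_eq_of_mul_normalLetter hlnd hidem q,
        ← mul_assoc, ← pow_succ]
      exact of_pow_mul_of_mem_range_normalForm q (a + 1) _

theorem normalForm_bijective (hbr : IsBraided r)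
    (hlnd : ∀ x : X, Bijective fun y => (r (x, y)).1) (hidem : r ∘ r = r) (q : X) :
    Bijective (normalForm r q) :=
  ⟨normalForm_injective hbr hlnd hidem q, normalForm_surjective hlnd hidem q⟩

end NormalForm

end

/-- Let `(X, r)` be a left nondegenerate idempotent braided set with an enumeration
`X = {x₁, …, xₙ}`, `n ≥ 2`, and `k` a field. Regard the Yang–Baxter algebra
`A = k[S(X, r)]` as a left `k[t]`-module via the algebra map `k[t] → A`, `t ↦ [x₁]`.
Then `A` is free of rank `n` with basis `(1, [x₂], …, [xₙ])`: the map
`(f₁, …, fₙ) ↦ f₁(t)·1 + Σᵢ₌₂ⁿ fᵢ(t)·[xᵢ]` from `(k[t])ⁿ` to `A` is a bijection. -/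
theorem stmt7 {X : Type*} (r : X × X → X × X)
    (hbr : IsBraided r)
    (hlnd : ∀ x : X, Function.Bijective fun y => (r (x, y)).1)
    (hidem : r ∘ r = r)
    (n : ℕ) (hn : 2 ≤ n) (e : Fin n ≃ X)
    (k : Type*) [Field k] :
    Function.Bijective (fun g : Fin n → Polynomial k =>
      ∑ i : Fin n,
        (Polynomial.aeval
            (MonoidAlgebra.of k (ybCon r).Quotient ((ybCon r).mk' (FreeMonoid.of (e ⟨0, by omega⟩))))
            (g i)) *
          (if i = ⟨0, by omega⟩ then 1
            else MonoidAlgebra.of k (ybCon r).Quotient ((ybCon r).mk' (FreeMonoid.of (e i))))) := by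
  classical
  set i₀ : Fin n := ⟨0, by omega⟩
  have hB : Function.Bijective fun p : ℕ × Fin n => normalForm r (e i₀) (p.1, e p.2) :=
    (normalForm_bijective hbr hlnd hidem (e i₀)).comp (Equiv.prodCongr (.refl ℕ) e).bijective
  -- `PresentedMonoid (ybRel r)` is `(ybCon r).Quotient` by definition.
  convert MonoidAlgebra.bijective_sum_aeval_mul_of (k := k) (M := (ybCon r).Quotient)
    (PresentedMonoid.of (ybRel r) (e i₀))
    (fun i => if e i = e i₀ then 1 else PresentedMonoid.of (ybRel r) (e i)) hB using 4 with g i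
  · rfl
  · simp only [EmbeddingLike.apply_eq_iff_eq]
    by_cases h : i = i₀
    · simp only [h, ↓reduceIte, map_one]
    · simp only [h, ↓reduceIte]
      rfl
end

section
/- Let X be a nonempty set and λ : X → X → X a family of maps with λ_x : X → X bijective for every x ∈ X, and define r : X × X → X × X by r(x,y) = (λ_x(y), y). Then the following are equivalent: (1) (X,r) is a braided set (r satisfies the set-theoretic braid relation); (2) condition l1 holds: x▷(y▷z) = (x▷y)▷((x◁y)▷z) for all x,y,z ∈ X, where x▷y = λ_x(y) and x◁y = y; (3) there exists a single bijection f : X → X such that λ_x = f for all x ∈ X, i.e., r(x,y) = (f(y), y). Moreover, under these equivalent conditions r is idempotent: r ∘ r = r. -/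
/-- Let `X` be nonempty, `lam : X → X → X` a family with each `lam x` bijective, and
`r (x, y) = (lam x y, y)`. Then the following are equivalent: (1) `(X, r)` is a braided
set; (2) condition l1 holds: `lam x (lam y z) = lam (lam x y) (lam y z)` for all
`x, y, z`; (3) there is a single bijection `f` with `lam x = f` for all `x`, i.e.
`r (x, y) = (f y, y)`. Moreover, under these equivalent conditions `r` is idempotent. -/
theorem stmt8 {X : Type*} [Nonempty X] (lam : X → X → X)
    (hbij : ∀ x : X, Function.Bijective (lam x))
    (r : X × X → X × X) (hr : ∀ x y : X, r (x, y) = (lam x y, y)) :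
    (IsBraided r ↔ ∀ x y z : X, lam x (lam y z) = lam (lam x y) (lam y z)) ∧
    (IsBraided r ↔ ∃ f : X → X, Function.Bijective f ∧ ∀ x y : X, lam x y = f y) ∧
    (IsBraided r → r ∘ r = r) := by
  obtain ⟨x0⟩ := ‹Nonempty X›
  have key : IsBraided r ↔ ∀ x y z : X,
      lam (lam x y) (lam y z) = lam x (lam y z) ∧ lam y z = lam (lam y z) z := by
    constructor
    · intro h x y z
      have h2 := congrFun h (x, y, z)
      simp only [Function.comp, rOneMap, rTwoMap, hr, Prod.mk.injEq] at h2
      exact ⟨h2.1, h2.2.1⟩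
    · intro h
      funext p
      obtain ⟨x, y, z⟩ := p
      simp only [Function.comp, rOneMap, rTwoMap, hr, Prod.mk.injEq]
      exact ⟨(h x y z).1, (h x y z).2, trivial⟩
  -- l1 implies lam is constant
  have hconst : (∀ x y z : X, lam x (lam y z) = lam (lam x y) (lam y z)) →
      ∀ u : X, lam u = lam x0 := by
    intro h u
    have step : ∀ x y : X, lam (lam x y) = lam x := by
      intro x y
      funext w
      obtain ⟨z, hz⟩ := (hbij y).2 w
      rw [← hz]
      exact (h x y z).symm
    obtain ⟨y, hy⟩ := (hbij x0).2 u
    rw [← hy, step]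
  have h3braid : (∃ f : X → X, Function.Bijective f ∧ ∀ x y : X, lam x y = f y) →
      IsBraided r := by
    rintro ⟨f, hf, hlf⟩
    rw [key]
    intro x y z
    simp [hlf]
  have h13 : IsBraided r ↔ ∃ f : X → X, Function.Bijective f ∧ ∀ x y : X, lam x y = f y := by
    constructor
    · intro h
      have h1 : ∀ x y z : X, lam x (lam y z) = lam (lam x y) (lam y z) :=
        fun x y z => ((key.mp h) x y z).1.symm
      exact ⟨lam x0, hbij x0, fun x y => congrFun (hconst h1 x) y⟩
    · exact h3braid
  refine ⟨⟨fun h x y z => ((key.mp h) x y z).1.symm, fun h1 => h3braid ?_⟩, h13, ?_⟩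
  · exact ⟨lam x0, hbij x0, fun x y => congrFun (hconst h1 x) y⟩
  · intro h
    obtain ⟨f, hf, hlf⟩ := h13.mp h
    funext p
    obtain ⟨x, y⟩ := p
    simp [Function.comp, hr, hlf]
end

section
/- Let (X,r_f) be a permutation idempotent solution on a finite set X, fix x₁ ∈ X, and let d ≥ 2. Then for all y₁, …, y_{d−1} ∈ X and all x ∈ X, the equality [y₁y₂⋯y_{d−1}x] = [x₁^{d−1}x] holds in the Yang–Baxter monoid S(X,r_f) (and hence in the Yang–Baxter algebra A(k,X,r_f) for any field k). -/
/-- The permutation idempotent solution `r_f (x, y) = (f y, y)` attached to a map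
`f : X → X`. -/
def rPerm {X : Type*} (f : X → X) : X × X → X × X := fun p => (f p.2, p.2)

def canWord {X : Type*} (f : X → X) (x : X) : ℕ → List X
  | 0 => [x]
  | n + 1 => f^[n + 1] x :: canWord f x n

lemma canWord_head {X : Type*} (f : X → X) (x : X) (n : ℕ) :
    ∃ t, canWord f x n = f^[n] x :: t := by
  cases n with
  | zero => exact ⟨[], rfl⟩
  | succ m => exact ⟨canWord f x m, rfl⟩

lemma ybRel_step {X : Type*} (f : X → X) (a c : X) :
    (ybCon (rPerm f)) (FreeMonoid.of a * FreeMonoid.of c)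
      (FreeMonoid.of (f c) * FreeMonoid.of c) :=
  ConGen.Rel.of _ _ ⟨a, c, rfl, rfl⟩

lemma canon {X : Type*} (f : X → X) (ys : List X) (x : X) :
    (ybCon (rPerm f)).mk' (FreeMonoid.ofList ys * FreeMonoid.of x)
      = (ybCon (rPerm f)).mk' (FreeMonoid.ofList (canWord f x ys.length)) := by
  induction ys with
  | nil => rfl
  | cons a ys ih =>
      have h1 : FreeMonoid.ofList (a :: ys) * FreeMonoid.of x
          = FreeMonoid.of a * (FreeMonoid.ofList ys * FreeMonoid.of x) := rfl
      obtain ⟨t, ht⟩ := canWord_head f x ys.length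
      have h2 : FreeMonoid.ofList (canWord f x ys.length)
          = FreeMonoid.of (f^[ys.length] x) * FreeMonoid.ofList t := by
        rw [ht]; rfl
      have h3 : FreeMonoid.ofList (canWord f x (ys.length + 1))
          = FreeMonoid.of (f^[ys.length + 1] x) * (FreeMonoid.of (f^[ys.length] x)
              * FreeMonoid.ofList t) := by
        show FreeMonoid.ofList (f^[ys.length + 1] x :: canWord f x ys.length) = _
        rw [ht]; rfl
      calc (ybCon (rPerm f)).mk' (FreeMonoid.ofList (a :: ys) * FreeMonoid.of x)
          = (ybCon (rPerm f)).mk' (FreeMonoid.of a)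
              * (ybCon (rPerm f)).mk' (FreeMonoid.ofList ys * FreeMonoid.of x) := by
            rw [h1, map_mul]
        _ = (ybCon (rPerm f)).mk' (FreeMonoid.of a)
              * (ybCon (rPerm f)).mk' (FreeMonoid.ofList (canWord f x ys.length)) := by
            rw [ih]
        _ = (ybCon (rPerm f)).mk' ((FreeMonoid.of a * FreeMonoid.of (f^[ys.length] x))
              * FreeMonoid.ofList t) := by
            rw [← map_mul, h2, mul_assoc]
        _ = (ybCon (rPerm f)).mk' ((FreeMonoid.of (f (f^[ys.length] x))
              * FreeMonoid.of (f^[ys.length] x)) * FreeMonoid.ofList t) := by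
            exact (Con.eq _).mpr ((ybCon (rPerm f)).mul (ybRel_step f a (f^[ys.length] x))
              ((ybCon (rPerm f)).refl _))
        _ = (ybCon (rPerm f)).mk' (FreeMonoid.ofList (canWord f x (ys.length + 1))) := by
            rw [h3, mul_assoc, ← Function.iterate_succ_apply' f]
      
/-- Let `(X, r_f)` be a permutation idempotent solution on a finite set `X`, `x₁ ∈ X`,
and `d ≥ 2`. Then `[y₁ y₂ ⋯ y_{d-1} x] = [x₁^{d-1} x]` in `S(X, r_f)` for all
`y₁, …, y_{d-1}, x ∈ X`. -/
theorem stmt10 {X : Type*} [Finite X] (f : X → X) (hf : Function.Bijective f)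
    (x₁ : X) (d : ℕ) (hd : 2 ≤ d)
    (ys : List X) (hlen : ys.length = d - 1) (x : X) :
    (ybCon (rPerm f)).mk' (FreeMonoid.ofList ys * FreeMonoid.of x)
      = (ybCon (rPerm f)).mk' (FreeMonoid.of x₁ ^ (d - 1) * FreeMonoid.of x) := by
  have key := canon f ys x
  have key2 := canon f (List.replicate (d-1) x₁) x
  have hpow : FreeMonoid.ofList (List.replicate (d-1) x₁) = FreeMonoid.of x₁ ^ (d-1) := by
    induction (d-1) with
    | zero => rfl
    | succ n ih =>
        rw [List.replicate_succ, pow_succ']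
        show FreeMonoid.of x₁ * FreeMonoid.ofList (List.replicate n x₁) = _
        rw [ih]
  rw [key, ← hpow, key2, List.length_replicate, hlen]
end

section
/- Let M be a braided (matched-pair) monoid with operations ▷,◁, and let ℓ : M → (ℕ,+) be a monoid homomorphism such that ℓ(a▷b) = ℓ(b) and ℓ(a◁b) = ℓ(a) for all a, b ∈ M, such that ℓ⁻¹({0}) = {1}, and such that every element a with ℓ(a) = m ≥ 1 is a product of m elements of X := ℓ⁻¹({1}). If the idempotency condition pr holds for every pair (x,y) with x, y ∈ X, then pr holds for every pair (a,b) with ℓ(a) = ℓ(b): (a▷b)▷(a◁b) = a▷b and (a▷b)◁(a◁b) = a◁b. (Equivalently: if (X,r) is an idempotent braided set, then the restricted solutions (S_d, r_d) on the degree-d components of the graded braided monoid S(X,r) are idempotent for all d ≥ 1.) -/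
/-- Let `M` be a braided (matched-pair) monoid with left action `dl a b = a ▷ b` and
right action `dr a b = a ◁ b`, graded by a length function `ℓ : M → ℕ` which is a monoid
homomorphism to `(ℕ, +)`, preserved by the actions (`ℓ(a ▷ b) = ℓ b`, `ℓ(a ◁ b) = ℓ a`),
with `ℓ⁻¹({0}) = {1}`, and such that every element of length `m ≥ 1` is a product of `m`
elements of length 1. If the idempotency condition pr holds for all pairs of elements of
length 1, then it holds for every pair of elements of equal length:
`(a ▷ b) ▷ (a ◁ b) = a ▷ b` and `(a ▷ b) ◁ (a ◁ b) = a ◁ b` whenever `ℓ a = ℓ b`. -/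
theorem stmt13 {M : Type*} [Monoid M]
    (dl dr : M → M → M)
    (hML0a : ∀ a : M, dl a 1 = 1) (hML0b : ∀ u : M, dl 1 u = u)
    (hMR0a : ∀ u : M, dr 1 u = 1) (hMR0b : ∀ a : M, dr a 1 = a)
    (hML1 : ∀ a b u : M, dl (a * b) u = dl a (dl b u))
    (hMR1 : ∀ a u v : M, dr a (u * v) = dr (dr a u) v)
    (hML2 : ∀ a u v : M, dl a (u * v) = dl a u * dl (dr a u) v)
    (hMR2 : ∀ a b u : M, dr (a * b) u = dr a (dl b u) * dr b u)
    (hM3 : ∀ a b : M, dl a b * dr a b = a * b)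
    (ℓ : M → ℕ)
    (hone : ℓ 1 = 0)
    (hmul : ∀ a b : M, ℓ (a * b) = ℓ a + ℓ b)
    (hdl : ∀ a b : M, ℓ (dl a b) = ℓ b)
    (hdr : ∀ a b : M, ℓ (dr a b) = ℓ a)
    (hker : ∀ a : M, ℓ a = 0 → a = 1)
    (hgen : ∀ a : M, 1 ≤ ℓ a → ∃ l : List M,
      (∀ x ∈ l, ℓ x = 1) ∧ l.length = ℓ a ∧ l.prod = a)
    (hpr : ∀ x y : M, ℓ x = 1 → ℓ y = 1 →
      dl (dl x y) (dr x y) = dl x y ∧ dr (dl x y) (dr x y) = dr x y) :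
    ∀ a b : M, ℓ a = ℓ b →
      dl (dl a b) (dr a b) = dl a b ∧ dr (dl a b) (dr a b) = dr a b := by
  -- length of a product of length-1 elements
  have hlen : ∀ l : List M, (∀ x ∈ l, ℓ x = 1) → ℓ l.prod = l.length := by
    intro l
    induction l with
    | nil => intro _; simpa using hone
    | cons g t ih =>
      intro hl
      rw [List.prod_cons, hmul, hl g (by simp), ih (fun x hx => hl x (by simp [hx])),
        List.length_cons]
      omega
  suffices H : ∀ n : ℕ, ∀ a b : M, ℓ a = n → ℓ b = n →
      dl (dl a b) (dr a b) = dl a b ∧ dr (dl a b) (dr a b) = dr a b by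
    intro a b hab
    exact H (ℓ a) a b rfl hab.symm
  intro n
  induction n using Nat.strong_induction_on with
  | _ n IH =>
    intro a b ha hb
    cases n with
    | zero =>
      have ha1 : a = 1 := hker a ha
      have hb1 : b = 1 := hker b hb
      subst ha1; subst hb1
      constructor
      · rw [hML0b, hMR0a, hML0a]
      · rw [hML0b, hMR0a, hMR0b]
    | succ n =>
      -- decompose a = g * x with ℓ g = 1, ℓ x = n
      obtain ⟨l, hl1, hl2, hl3⟩ := hgen a (by omega)
      cases l with
      | nil => simp [ha] at hl2
      | cons g t =>
        -- decompose b = y * h with ℓ y = n, ℓ h = 1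
        obtain ⟨l', hl1', hl2', hl3'⟩ := hgen b (by omega)
        rcases l'.eq_nil_or_concat with rfl | ⟨s, hgen2, rfl⟩
        · simp [hb] at hl2'
        · set x := t.prod with hxdef
          set y := s.prod with hydef
          have hg1 : ℓ g = 1 := hl1 g (by simp)
          have hh1 : ℓ hgen2 = 1 := hl1' hgen2 (by simp)
          have hx : ℓ x = n := by
            have := hlen t (fun z hz => hl1 z (by simp [hz]))
            have hlt : t.length = n := by
              rw [ha] at hl2; simpa using hl2
            rw [hxdef, this, hlt]
          have hy : ℓ y = n := by
            have := hlen s (fun z hz => hl1' z (by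
              simp only [List.concat_eq_append, List.mem_append] at *
              exact Or.inl hz))
            have hls : s.length = n := by
              rw [hb] at hl2'
              simp only [List.concat_eq_append, List.length_append,
                List.length_cons, List.length_nil] at hl2'
              omega
            rw [hydef, this, hls]
          have hadef : a = g * x := by
            rw [← hl3, List.prod_cons]
          have hbdef : b = y * hgen2 := by
            rw [← hl3', List.concat_eq_append, List.prod_append, List.prod_cons,
              List.prod_nil, mul_one]
          -- the fixed pair (u, v) from the induction hypothesis
          set u := dl x y with hudef
          set v := dr x y with hvdef
          obtain ⟨hu, hv⟩ := IH n (Nat.lt_succ_self n) x y hx hy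
          -- abbreviations
          set κ := dl g u with hκdef
          set δ := dr g u with hδdef
          set e := dl v hgen2 with hedef
          set f := dr v hgen2 with hfdef
          have hδ1 : ℓ δ = 1 := by rw [hδdef, hdr, hg1]
          have he1 : ℓ e = 1 := by rw [hedef, hdl, hh1]
          obtain ⟨hpq1, hpq2⟩ := hpr δ e hδ1 he1
          set p := dl δ e with hpdef
          set q := dr δ e with hqdef
          -- Claim A: dl a b = κ * p and dr a b = q * f
          have hA1 : dl a b = κ * p := by
            rw [hadef, hbdef, hML1, hML2 x y hgen2, ← hudef, ← hvdef, ← hedef,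
              hML2 g u e, ← hκdef, ← hδdef, ← hpdef]
          have hA2 : dr a b = q * f := by
            rw [hadef, hbdef, hMR1, hMR2 g x y, ← hudef, ← hvdef, ← hδdef,
              hMR2 δ v hgen2, ← hedef, ← hfdef, ← hqdef]
          -- Claim B: dl (κ * p) (q * f) = κ * p
          have hB : dl (κ * p) (q * f) = κ * p := by
            calc dl (κ * p) (q * f)
                = dl κ (dl p (q * f)) := hML1 κ p (q * f)
              _ = dl κ (dl p q * dl (dr p q) f) := by rw [hML2 p q f]
              _ = dl κ (dl δ e * dl (dr δ e) f) := by rw [hpq1, hpq2, hpdef, hqdef]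
              _ = dl κ (dl δ (e * f)) := by rw [← hML2 δ e f]
              _ = dl (κ * δ) (e * f) := (hML1 κ δ (e * f)).symm
              _ = dl (κ * δ) (v * hgen2) := by
                    rw [hedef, hfdef, hM3 v hgen2]
              _ = dl (g * u) (v * hgen2) := by rw [hκdef, hδdef, hM3 g u]
              _ = dl g (dl u (v * hgen2)) := hML1 g u (v * hgen2)
              _ = dl g (dl u v * dl (dr u v) hgen2) := by rw [hML2 u v hgen2]
              _ = dl g (u * e) := by rw [hu, hv, ← hedef]
              _ = dl g u * dl (dr g u) e := hML2 g u e
              _ = κ * p := by rw [← hκdef, ← hδdef, ← hpdef]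
          -- Claim C: dr (κ * p) (q * f) = q * f
          have hC : dr (κ * p) (q * f) = q * f := by
            calc dr (κ * p) (q * f)
                = dr (dr (κ * p) q) f := hMR1 (κ * p) q f
              _ = dr (dr κ (dl p q) * dr p q) f := by rw [hMR2 κ p q]
              _ = dr (dr κ (dl δ e) * dr δ e) f := by rw [hpq1, hpq2, hpdef, hqdef]
              _ = dr (dr (κ * δ) e) f := by rw [← hMR2 κ δ e]
              _ = dr (κ * δ) (e * f) := (hMR1 (κ * δ) e f).symm
              _ = dr (κ * δ) (v * hgen2) := by rw [hedef, hfdef, hM3 v hgen2]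
              _ = dr (g * u) (v * hgen2) := by rw [hκdef, hδdef, hM3 g u]
              _ = dr (dr (g * u) v) hgen2 := hMR1 (g * u) v hgen2
              _ = dr (dr g (dl u v) * dr u v) hgen2 := by rw [hMR2 g u v]
              _ = dr (δ * v) hgen2 := by rw [hu, hv, ← hudef, ← hδdef]
              _ = dr δ (dl v hgen2) * dr v hgen2 := hMR2 δ v hgen2
              _ = q * f := by rw [← hedef, ← hfdef, ← hqdef]
          rw [hA1, hA2]
          exact ⟨hB, hC⟩
end

section
/- Let X be a set with |X| = n ≥ 2 and f : X → X a bijection. Let N := {d ∈ ℕ : d ≥ 1} × X and define ρ : N × N → N × N by ρ((d,x),(m,y)) := ((m, f^d(y)), (d, y)). Then: (i) ρ satisfies the set-theoretic braid relation, so (N,ρ) is a braided set; (ii) ρ is left nondegenerate, i.e., for each a ∈ N the map sending b to the first component of ρ(a,b) is a bijection of N; (iii) ρ∘ρ∘ρ = ρ; (iv) ρ∘ρ ≠ ρ; (v) for each d ≥ 1 the restriction of ρ to pairs with both first coordinates equal to d is given by ((d,x),(d,y)) ↦ ((d, f^d(y)), (d,y)), i.e., under the identification (d,x) ↔ x it is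 the permutation idempotent solution (X, r_{f^d}). -/
/-- The braiding operator `ρ((d,x),(m,y)) = ((m, f^d(y)), (d, y))` of the normalised
braided monoid of a permutation idempotent solution `(X, r_f)`, on the set
`N = {d ∈ ℕ : d ≥ 1} × X` of nonidentity normal words `(d, x) ↔ x₁^{d-1} x`. -/
def rhoMap {X : Type*} (f : Equiv.Perm X) :
    (ℕ+ × X) × (ℕ+ × X) → (ℕ+ × X) × (ℕ+ × X) :=
  fun p => ((p.2.1, (f ^ (p.1.1 : ℕ)) p.2.2), (p.1.1, p.2.2))

/-- Let `X` be a set with `|X| = n ≥ 2` and `f : X → X` a bijection, and let `ρ` be the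
braiding operator above on `N = ℕ₊ × X`. Then (i) `(N, ρ)` is a braided set; (ii) `ρ` is
left nondegenerate; (iii) `ρ∘ρ∘ρ = ρ`; (iv) `ρ∘ρ ≠ ρ`; and (v) the restriction of `ρ` to
pairs with equal first coordinate `d` is `((d,x),(d,y)) ↦ ((d, f^d(y)), (d,y))`, i.e.
the permutation idempotent solution `(X, r_{f^d})` under the identification
`(d, x) ↔ x`. -/
theorem stmt14 {X : Type*} (n : ℕ) (hn : 2 ≤ n) (hcard : Nat.card X = n)
    (f : Equiv.Perm X) :
    IsBraided (rhoMap f) ∧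
    (∀ a : ℕ+ × X, Function.Bijective fun b : ℕ+ × X => ((rhoMap f) (a, b)).1) ∧
    (rhoMap f ∘ rhoMap f ∘ rhoMap f = rhoMap f) ∧
    (rhoMap f ∘ rhoMap f ≠ rhoMap f) ∧
    (∀ (d : ℕ+) (x y : X),
      rhoMap f ((d, x), (d, y)) = ((d, (f ^ (d : ℕ)) y), (d, y))) := by
  have hne : Nonempty X := by
    have : 0 < Nat.card X := by omega
    exact Nat.card_pos_iff.mp this |>.1
  obtain ⟨x0⟩ := hne
  refine ⟨?_, ?_, ?_, ?_, ?_⟩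
  · funext p
    obtain ⟨⟨d, x⟩, ⟨m, y⟩, ⟨k, z⟩⟩ := p
    simp only [rOneMap, rTwoMap, rhoMap, Function.comp_apply, Prod.mk.injEq]
    simp [← Equiv.Perm.mul_apply, ← pow_add, Nat.add_comm]
  · intro a
    exact (Equiv.prodCongr (Equiv.refl ℕ+) (f ^ (a.1 : ℕ))).bijective
  · funext p
    obtain ⟨⟨d, x⟩, ⟨m, y⟩⟩ := p
    simp [rhoMap]
  · intro h
    have := congrFun h ((1, x0), (2, x0))
    simp [rhoMap, Prod.ext_iff] at this
  · intro d x y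
    rfl
end

section
/- Let X be a finite set with |X| = n ≥ 2, f : X → X a bijection, and d ≥ 2 an integer. Then the submonoid {s ∈ S(X,r_f) : d divides ℓ(s)} of the Yang–Baxter monoid S(X,r_f) is isomorphic as a monoid to S(X, r_{f^d}). Consequently, for every field k the d-Veronese subalgebra A(k,X,r_f)^{(d)} = ⊕_{m≥0} A_{md} of the Yang–Baxter algebra A(k,X,r_f) is isomorphic to A(k,X,r_{f^d}). -/
/-!
In `S(X, r_g)` the relations give `x y = g(y) y = y y`, so every nonempty word equals `y ^ n` where
`y` is its last letter and `n` its length, and both are invariants of the relations. Hence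
`S(X, r_g)` is, whatever `g` is, the monoid of pairs (length, last letter) with
`(m, x) (n, y) = (m + n, y)`, plus a unit. Multiplying lengths by `d` embeds this monoid onto its
elements of length divisible by `d`; applying `k[-]` to the inclusion of that submonoid gives the
Veronese statement.
-/

section

variable {X : Type*}

/-- `⟨n, x⟩` stands for the nonempty words of length `n` ending in `x`. -/
@[ext]
structure LenLast (X : Type*) where
  len : ℕ+
  last : X

namespace LenLast

instance : Semigroup (LenLast X) where
  mul a b := ⟨a.len + b.len, b.last⟩
  mul_assoc a b c := LenLast.ext (add_assoc a.len b.len c.len) rfl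

lemma mk_mul_mk (m n : ℕ+) (x y : X) : (⟨m, x⟩ * ⟨n, y⟩ : LenLast X) = ⟨m + n, y⟩ := rfl

lemma coe_mk_one_pow (n : ℕ+) (x : X) :
    ((⟨1, x⟩ : LenLast X) : WithOne (LenLast X)) ^ (n : ℕ) = ((⟨n, x⟩ : LenLast X) : WithOne _) := by
  induction n using PNat.recOn with
  | one => exact pow_one _
  | succ n ih => rw [PNat.add_coe, PNat.one_coe, pow_succ, ih, ← WithOne.coe_mul, mk_mul_mk]

def wordLength : WithOne (LenLast X) → ℕ := WithOne.recOneCoe 0 fun p => p.len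

@[simp] lemma wordLength_one : wordLength (1 : WithOne (LenLast X)) = 0 := rfl

@[simp] lemma wordLength_coe (p : LenLast X) : wordLength (p : WithOne (LenLast X)) = p.len := rfl

def scale (d : ℕ+) : LenLast X →ₙ* LenLast X where
  toFun p := ⟨d * p.len, p.last⟩
  map_mul' a b := LenLast.ext (mul_add d a.len b.len) rfl

lemma scale_injective (d : ℕ+) : Function.Injective (scale (X := X) d) := by
  intro p q h
  obtain ⟨hpq, hlast⟩ := LenLast.ext_iff.1 h
  exact LenLast.ext (mul_left_cancel hpq) hlast

lemma mem_mrange_scale_iff (d : ℕ+) (w : WithOne (LenLast X)) :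
    w ∈ MonoidHom.mrange (WithOne.mapMulHom (scale d)) ↔ (d : ℕ) ∣ wordLength w := by
  induction w using WithOne.recOneCoe with
  | one => simp
  | coe p =>
    rw [wordLength_coe, ← PNat.dvd_iff, MonoidHom.mem_mrange]
    constructor
    · rintro ⟨w, hw⟩
      induction w using WithOne.recOneCoe with
      | one => exact absurd hw WithOne.one_ne_coe
      | coe q =>
        rw [WithOne.mapMulHom_coe, WithOne.coe_inj] at hw
        exact ⟨q.len, by rw [← hw]; rfl⟩
    · rintro ⟨c, hc⟩
      exact ⟨(⟨c, p.last⟩ : LenLast X), by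
        rw [WithOne.mapMulHom_coe, WithOne.coe_inj]; exact LenLast.ext hc.symm rfl⟩

end LenLast

namespace PermYB

open LenLast

variable (g : X → X)

def gen (x : X) : (ybCon (rPerm g)).Quotient := (ybCon (rPerm g)).mk' (FreeMonoid.of x)

lemma gen_mul_gen_eq_gen_apply_mul_gen (x y : X) : gen g x * gen g y = gen g (g y) * gen g y :=
  (Con.eq _).2 (ConGen.Rel.of _ _ ⟨x, y, rfl, rfl⟩)

lemma gen_mul_gen (x y : X) : gen g x * gen g y = gen g y ^ 2 := by
  rw [gen_mul_gen_eq_gen_apply_mul_gen, ← gen_mul_gen_eq_gen_apply_mul_gen g y y, sq]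

lemma gen_pow_mul_gen (x y : X) (m : ℕ) : gen g x ^ m * gen g y = gen g y ^ (m + 1) := by
  induction m with
  | zero => rw [pow_zero, one_mul, zero_add, pow_one]
  | succ m ih => rw [pow_succ, mul_assoc, gen_mul_gen, sq, ← mul_assoc, ih, ← pow_succ]

lemma gen_pow_mul_gen_pow (x y : X) (m : ℕ) {n : ℕ} (hn : n ≠ 0) :
    gen g x ^ m * gen g y ^ n = gen g y ^ (m + n) := by
  obtain ⟨n, rfl⟩ := Nat.exists_eq_add_one_of_ne_zero hn
  rw [pow_succ', ← mul_assoc, gen_pow_mul_gen, ← pow_add, add_right_comm, add_assoc]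

def toModel : (ybCon (rPerm g)).Quotient →* WithOne (LenLast X) :=
  (ybCon (rPerm g)).lift (FreeMonoid.lift fun x => ((⟨1, x⟩ : LenLast X) : WithOne _)) <| by
    refine Con.conGen_le.2 ?_
    rintro _ _ ⟨x, y, rfl, rfl⟩
    simp only [Con.ker_rel, map_mul, FreeMonoid.lift_eval_of, ← WithOne.coe_mul]
    rfl

lemma toModel_gen (x : X) : toModel g (gen g x) = ((⟨1, x⟩ : LenLast X) : WithOne _) := rfl

def ofModel : WithOne (LenLast X) →* (ybCon (rPerm g)).Quotient :=
  WithOne.lift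
    { toFun := fun p => gen g p.last ^ (p.len : ℕ)
      map_mul' := fun a b => by
        rw [gen_pow_mul_gen_pow g _ _ _ b.len.ne_zero]
        rfl }

lemma ofModel_coe (p : LenLast X) : ofModel g p = gen g p.last ^ (p.len : ℕ) := rfl

def equivModel : (ybCon (rPerm g)).Quotient ≃* WithOne (LenLast X) :=
  MonoidHom.toMulEquiv (toModel g) (ofModel g)
    (Con.hom_ext <| FreeMonoid.hom_eq fun x => pow_one (gen g x))
    (WithOne.lift.symm.injective <| MulHom.ext fun p => by
      simp [ofModel_coe, map_pow, toModel_gen, coe_mk_one_pow])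

lemma length_gen_pow (ℓ : (ybCon (rPerm g)).Quotient → ℕ)
    (hone : ∀ x, ℓ (gen g x) = 1) (hmul : ∀ a b, ℓ (a * b) = ℓ a + ℓ b) (x : X) (n : ℕ) :
    ℓ (gen g x ^ n) = n := by
  induction n with
  | zero => simpa using hmul 1 1
  | succ n ih => rw [pow_succ, hmul, ih, hone]

lemma length_eq_wordLength_equivModel (ℓ : (ybCon (rPerm g)).Quotient → ℕ)
    (hone : ∀ x, ℓ (gen g x) = 1) (hmul : ∀ a b, ℓ (a * b) = ℓ a + ℓ b)
    (s : (ybCon (rPerm g)).Quotient) : ℓ s = wordLength (equivModel g s) := by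
  obtain ⟨w, rfl⟩ := (equivModel g).symm.surjective s
  rw [MulEquiv.apply_symm_apply]
  induction w using WithOne.recOneCoe with
  | one => simpa using hmul 1 1
  | coe p => exact length_gen_pow g ℓ hone hmul p.last p.len

theorem exists_submonoid_dvd_length_mulEquiv (g h : X → X) (d : ℕ+)
    (ℓ : (ybCon (rPerm h)).Quotient → ℕ)
    (hone : ∀ x, ℓ (gen h x) = 1) (hmul : ∀ a b, ℓ (a * b) = ℓ a + ℓ b) :
    ∃ T : Submonoid (ybCon (rPerm h)).Quotient,
      (∀ s, s ∈ T ↔ (d : ℕ) ∣ ℓ s) ∧ Nonempty (T ≃* (ybCon (rPerm g)).Quotient) := by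
  let χ := (equivModel h).symm.toMonoidHom.comp
    ((WithOne.mapMulHom (scale d)).comp (equivModel g).toMonoidHom)
  have hχ : Function.Injective χ := (equivModel h).symm.injective.comp <|
    (WithOne.mapMulHom_injective (scale_injective d)).comp (equivModel g).injective
  refine ⟨MonoidHom.mrange χ, fun s => ?_, ⟨(MulEquiv.ofBijective χ.mrangeRestrict
    ⟨fun a b hab => hχ (congrArg Subtype.val hab), χ.mrangeRestrict_surjective⟩).symm⟩⟩
  rw [length_eq_wordLength_equivModel h ℓ hone hmul, ← mem_mrange_scale_iff]
  simp [χ, MonoidHom.mem_mrange, MulEquiv.symm_apply_eq, (equivModel g).surjective.exists]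

end PermYB

end

theorem MonoidAlgebra.toSubmodule_range_mapDomainAlgHom_subtype {k M : Type*} [CommSemiring k]
    [Monoid M] (T : Submonoid M) :
    Subalgebra.toSubmodule (mapDomainAlgHom k k T.subtype).range = .span k (of k M '' T) := by
  refine le_antisymm ?_ (Submodule.span_le.2 ?_)
  · intro y hy
    obtain ⟨x, rfl⟩ := (AlgHom.mem_range _).1 hy
    clear hy
    induction x using MonoidAlgebra.induction_linear with
    | zero => simp
    | add x y hx hy => rw [map_add]; exact add_mem hx hy
    | single t c =>
      have : mapDomainAlgHom k k T.subtype (single t c) = c • of k M t := by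
        simp [mapDomainAlgHom]
      rw [this]
      exact Submodule.smul_mem _ c (Submodule.subset_span ⟨t, t.2, rfl⟩)
  · rintro _ ⟨t, ht, rfl⟩
    exact ⟨single ⟨t, ht⟩ 1, by simp [mapDomainAlgHom]⟩

theorem stmt15_general {X : Type*}
    (f : Equiv.Perm X) (d : ℕ) (hd : 2 ≤ d)
    (ℓ : (ybCon (rPerm ⇑f)).Quotient → ℕ)
    (hone : ∀ x : X, ℓ ((ybCon (rPerm ⇑f)).mk' (FreeMonoid.of x)) = 1)
    (hmul : ∀ a b, ℓ (a * b) = ℓ a + ℓ b)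
    (k : Type*) [Field k] :
    (∃ T : Submonoid (ybCon (rPerm ⇑f)).Quotient,
      (∀ s, s ∈ T ↔ d ∣ ℓ s) ∧
      Nonempty (T ≃* (ybCon (rPerm ⇑(f ^ d))).Quotient)) ∧
    (∃ V : Subalgebra k (MonoidAlgebra k (ybCon (rPerm ⇑f)).Quotient),
      Subalgebra.toSubmodule V = Submodule.span k
        {a | ∃ s, d ∣ ℓ s ∧ a = MonoidAlgebra.of k (ybCon (rPerm ⇑f)).Quotient s} ∧
      Nonempty (V ≃ₐ[k] MonoidAlgebra k (ybCon (rPerm ⇑(f ^ d))).Quotient)) := by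
  obtain ⟨T, hT, ⟨e⟩⟩ :=
    PermYB.exists_submonoid_dvd_length_mulEquiv ⇑(f ^ d) ⇑f ⟨d, by omega⟩ ℓ hone hmul
  refine ⟨⟨T, hT, ⟨e⟩⟩, (MonoidAlgebra.mapDomainAlgHom k k T.subtype).range, ?_, ⟨?_⟩⟩
  · rw [MonoidAlgebra.toSubmodule_range_mapDomainAlgHom_subtype]
    congr 1
    ext a
    simp [hT, eq_comm]
  · exact (AlgEquiv.ofInjective _ (MonoidAlgebra.mapDomain_injective Subtype.val_injective)).symm
      |>.trans (MonoidAlgebra.domCongr k k e)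

/-- Let `X` be finite with `|X| = n ≥ 2`, `f : X → X` a bijection, `d ≥ 2`, and let
`ℓ : S(X, r_f) → ℕ` be the length function (the monoid homomorphism to `(ℕ, +)` sending
each generator to 1). Then the submonoid `{s : d ∣ ℓ(s)}` of `S(X, r_f)` is isomorphic
to `S(X, r_{f^d})`; consequently, for every field `k`, the `d`-Veronese subalgebra
`A(k, X, r_f)^{(d)} = ⊕ₘ A_{md}` (the span of the classes of length divisible by `d`,
which is a subalgebra) is isomorphic to `A(k, X, r_{f^d})`. -/
theorem stmt15 {X : Type*} [Finite X] (n : ℕ) (hn : 2 ≤ n) (hcard : Nat.card X = n)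
    (f : Equiv.Perm X) (d : ℕ) (hd : 2 ≤ d)
    (ℓ : (ybCon (rPerm ⇑f)).Quotient → ℕ)
    (hone : ∀ x : X, ℓ ((ybCon (rPerm ⇑f)).mk' (FreeMonoid.of x)) = 1)
    (hmul : ∀ a b, ℓ (a * b) = ℓ a + ℓ b)
    (k : Type*) [Field k] :
    (∃ T : Submonoid (ybCon (rPerm ⇑f)).Quotient,
      (∀ s, s ∈ T ↔ d ∣ ℓ s) ∧
      Nonempty (T ≃* (ybCon (rPerm ⇑(f ^ d))).Quotient)) ∧
    (∃ V : Subalgebra k (MonoidAlgebra k (ybCon (rPerm ⇑f)).Quotient),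
      Subalgebra.toSubmodule V = Submodule.span k
        {a | ∃ s, d ∣ ℓ s ∧ a = MonoidAlgebra.of k (ybCon (rPerm ⇑f)).Quotient s} ∧
      Nonempty (V ≃ₐ[k] MonoidAlgebra k (ybCon (rPerm ⇑(f ^ d))).Quotient)) :=
  stmt15_general f d hd ℓ hone hmul k
end

section
/- Let (X,r) and (Y,s) be left nondegenerate idempotent braided sets. Then two pairs ((x,a),(y,b)) and ((z,c),(w,d)) in (X×Y) × (X×Y) lie in the same (r*s)-orbit if and only if (x,y) and (z,w) lie in the same r-orbit in X × X and (a,b) and (c,d) lie in the same s-orbit in Y × Y. -/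
/-- The cartesian product solution `(X × Y, r * s)` of quadratic sets `(X, r)` and
`(Y, s)`. -/
def prodSol {X Y : Type*} (r : X × X → X × X) (s : Y × Y → Y × Y) :
    (X × Y) × (X × Y) → (X × Y) × (X × Y) :=
  fun p => (((r (p.1.1, p.2.1)).1, (s (p.1.2, p.2.2)).1),
            ((r (p.1.1, p.2.1)).2, (s (p.1.2, p.2.2)).2))

lemma orbit_iff_of_idem {X : Type*} (r : X × X → X × X) (hir : r ∘ r = r)
    (p q : X × X) : rOrbitRel r p q ↔ r p = r q := by
  have hid : ∀ p, r (r p) = r p := fun p => congrFun hir p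
  constructor
  · intro h
    induction h with
    | rel p q h => subst h; exact (hid p).symm
    | refl => rfl
    | symm _ _ _ ih => exact ih.symm
    | trans _ _ _ _ _ ih1 ih2 => exact ih1.trans ih2
  · intro h
    exact .trans _ _ _ (.rel _ _ rfl) (.symm _ _ (h ▸ .rel q (r q) rfl))

/-- Let `(X, r)` and `(Y, s)` be left nondegenerate idempotent braided sets. Then
`((x,a),(y,b))` and `((z,c),(w,d))` lie in the same `(r*s)`-orbit iff `(x,y)`, `(z,w)`
lie in the same `r`-orbit and `(a,b)`, `(c,d)` lie in the same `s`-orbit. -/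
theorem stmt17 {X Y : Type*} (r : X × X → X × X) (s : Y × Y → Y × Y)
    (hbr : IsBraided r) (hbs : IsBraided s)
    (hlndr : ∀ x : X, Function.Bijective fun y => (r (x, y)).1)
    (hlnds : ∀ a : Y, Function.Bijective fun b => (s (a, b)).1)
    (hir : r ∘ r = r) (his : s ∘ s = s) :
    ∀ x y z w : X, ∀ a b c d : Y,
      rOrbitRel (prodSol r s) ((x, a), (y, b)) ((z, c), (w, d)) ↔
        (rOrbitRel r (x, y) (z, w) ∧ rOrbitRel s (a, b) (c, d)) := by
  have hips : prodSol r s ∘ prodSol r s = prodSol r s := by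
    funext p
    simp only [Function.comp_apply, prodSol]
    have h1 := congrFun hir (p.1.1, p.2.1)
    have h2 := congrFun his (p.1.2, p.2.2)
    simp only [Function.comp_apply] at h1 h2
    simp [h1, h2]
  intro x y z w a b c d
  rw [orbit_iff_of_idem _ hips, orbit_iff_of_idem _ hir, orbit_iff_of_idem _ his]
  constructor
  · intro h
    simp only [prodSol, Prod.mk.injEq] at h
    exact ⟨Prod.ext h.1.1 h.2.1, Prod.ext h.1.2 h.2.2⟩
  · rintro ⟨h1, h2⟩
    simp only [prodSol, Prod.mk.injEq]
    exact ⟨⟨congrArg Prod.fst h1, congrArg Prod.fst h2⟩,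
           congrArg Prod.snd h1, congrArg Prod.snd h2⟩
end

section
/- Let (X,r) and (Y,s) be finite left nondegenerate idempotent braided sets. The free monoid homomorphism on X×Y sending each generator (x,y) to ([x],[y]) induces a well-defined monoid homomorphism 𝔰 : S(X×Y, r*s) → S(X,r) × S(Y,s), and 𝔰 is injective with image exactly {(u,v) ∈ S(X,r) × S(Y,s) : ℓ(u) = ℓ(v)}. Consequently, for every field k, the Segre product A(k,X,r) ∘ A(k,Y,s) (the subalgebra ⊕_{m≥0} A_m ⊗ B_m of A(k,X,r) ⊗ A(k,Y,s)) is isomorphic as a graded algebra to A(k, X×Y, r*s). -/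
open TensorProduct

/-!
For an idempotent braided set, inserting a letter `x` into a word `y :: v` by replacing `x y`
with `r (x, y)` and inserting the right-hand output into `v` respects the defining relations:
the braid relation and `r ∘ r = r` are exactly what makes the two insertion orders agree. So
inserting letters one at a time computes a normal form, and two words are equal in `S(X, r)`
iff their normal forms coincide. The projections of `X × Y` are morphisms of quadratic sets and
commute with insertion, so the normal form of a word over `X × Y` is the zip of the normal
forms of its two projections; this makes `𝔰` injective, and zipping two words of equal length
shows its image is the set of pairs of equal length. On the algebra side, `𝔰` maps the monoid
basis of `A(k, X × Y, r * s)` injectively into the tensor basis of `A(k, X, r) ⊗ A(k, Y, s)`.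
-/

namespace YangBaxter

variable {X X' : Type*} {r : X × X → X × X} {r' : X' × X' → X' × X'}

def ybInsert (r : X × X → X × X) : X → List X → List X
  | x, [] => [x]
  | x, y :: v => (r (x, y)).1 :: ybInsert r (r (x, y)).2 v

def ybNormalForm (r : X × X → X × X) (w : List X) : List X :=
  w.foldr (ybInsert r) []

theorem ybInsert_ybInsert_apply (hbr : IsBraided r) (hir : r ∘ r = r) (x y : X) (v : List X) :
    ybInsert r (r (x, y)).1 (ybInsert r (r (x, y)).2 v) = ybInsert r x (ybInsert r y v) := by
  induction v generalizing x y with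
  | nil =>
    have h : r ((r (x, y)).1, (r (x, y)).2) = r (x, y) := congrFun hir (x, y)
    simp only [ybInsert, h]
  | cons z v ih =>
    have h := congrFun hbr (x, y, z)
    simp only [Function.comp_apply, rOneMap, rTwoMap, Prod.mk.injEq] at h
    obtain ⟨h1, h2, h3⟩ := h
    simp only [ybInsert]
    rw [h1, h2, h3, ih]

/-- Letters act on words by insertion; on the empty word, `insertAction r w` computes
`ybNormalForm r w`. -/
def insertAction (r : X × X → X × X) : FreeMonoid X →* Function.End (List X) :=
  FreeMonoid.lift (ybInsert r)

theorem insertAction_ofList (l w : List X) :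
    insertAction r (FreeMonoid.ofList l) w = l.foldr (ybInsert r) w := by
  induction l with
  | nil => rfl
  | cons x l ih =>
    rw [FreeMonoid.ofList_cons, map_mul]
    exact congrArg (ybInsert r x) ih

theorem ybCon_le_ker_insertAction (hbr : IsBraided r) (hir : r ∘ r = r) :
    ybCon r ≤ Con.ker (insertAction r) := by
  refine Con.conGen_le.2 ?_
  rintro _ _ ⟨x, y, rfl, rfl⟩
  funext v
  exact (ybInsert_ybInsert_apply hbr hir x y v).symm

theorem ybCon_ofList_cons_ybInsert (x : X) (v : List X) :
    ybCon r (FreeMonoid.ofList (x :: v)) (FreeMonoid.ofList (ybInsert r x v)) := by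
  induction v generalizing x with
  | nil => exact (ybCon r).refl _
  | cons y v ih =>
    have hxy : ybCon r (FreeMonoid.of x * FreeMonoid.of y)
        (FreeMonoid.of (r (x, y)).1 * FreeMonoid.of (r (x, y)).2) :=
      ConGen.Rel.of _ _ ⟨x, y, rfl, rfl⟩
    simp only [ybInsert, FreeMonoid.ofList_cons, ← mul_assoc] at ih ⊢
    exact (ybCon r).trans ((ybCon r).mul hxy ((ybCon r).refl _))
      (by rw [mul_assoc]; exact (ybCon r).mul ((ybCon r).refl _) (ih _))

theorem ybCon_ofList_ybNormalForm (l : List X) :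
    ybCon r (FreeMonoid.ofList l) (FreeMonoid.ofList (ybNormalForm r l)) := by
  induction l with
  | nil => exact (ybCon r).refl _
  | cons x l ih =>
    have := (ybCon r).mul ((ybCon r).refl (FreeMonoid.of x)) ih
    rw [← FreeMonoid.ofList_cons, ← FreeMonoid.ofList_cons] at this
    exact (ybCon r).trans this (ybCon_ofList_cons_ybInsert x _)

theorem ybCon_mk'_ofList_eq_iff (hbr : IsBraided r) (hir : r ∘ r = r) (a b : List X) :
    (ybCon r).mk' (FreeMonoid.ofList a) = (ybCon r).mk' (FreeMonoid.ofList b) ↔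
      ybNormalForm r a = ybNormalForm r b := by
  refine (Con.eq _).trans ?_
  constructor
  · intro h
    have := congrFun (ybCon_le_ker_insertAction hbr hir h) []
    rwa [insertAction_ofList, insertAction_ofList] at this
  · intro h
    exact (ybCon r).trans (ybCon_ofList_ybNormalForm a)
      (h ▸ (ybCon r).symm (ybCon_ofList_ybNormalForm b))

theorem mk'_ofList_surjective {α : Type*} (c : Con (FreeMonoid α)) :
    Function.Surjective fun l : List α => c.mk' (FreeMonoid.ofList l) :=
  c.mk'_surjective.comp FreeMonoid.ofList.surjective

def IsQuadraticSetHom (r : X × X → X × X) (r' : X' × X' → X' × X') (f : X → X') : Prop :=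
  ∀ x y, r' (f x, f y) = Prod.map f f (r (x, y))

theorem IsQuadraticSetHom.map_ybInsert {f : X → X'} (hf : IsQuadraticSetHom r r' f)
    (x : X) (v : List X) : (ybInsert r x v).map f = ybInsert r' (f x) (v.map f) := by
  induction v generalizing x with
  | nil => rfl
  | cons y v ih => simp [ybInsert, hf x y, ih]

theorem IsQuadraticSetHom.map_ybNormalForm {f : X → X'} (hf : IsQuadraticSetHom r r' f)
    (l : List X) : (ybNormalForm r l).map f = ybNormalForm r' (l.map f) := by
  induction l with
  | nil => rfl
  | cons x l ih => exact (hf.map_ybInsert x _).trans (congrArg _ ih)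

theorem IsQuadraticSetHom.ybCon_le_comap {f : X → X'} (hf : IsQuadraticSetHom r r' f) :
    ybCon r ≤ (ybCon r').comap (FreeMonoid.map f) (map_mul _) := by
  refine Con.conGen_le.2 ?_
  rintro _ _ ⟨x, y, rfl, rfl⟩
  simp only [Con.comap_rel, map_mul, FreeMonoid.map_of]
  have h : (f (r (x, y)).1, f (r (x, y)).2) = r' (f x, f y) := (hf x y).symm
  rw [show f (r (x, y)).1 = (r' (f x, f y)).1 from congrArg Prod.fst h,
    show f (r (x, y)).2 = (r' (f x, f y)).2 from congrArg Prod.snd h]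
  exact ConGen.Rel.of _ _ ⟨f x, f y, rfl, rfl⟩

def ybMap {f : X → X'} (hf : IsQuadraticSetHom r r' f) :
    (ybCon r).Quotient →* (ybCon r').Quotient :=
  (ybCon r).lift ((ybCon r').mk'.comp (FreeMonoid.map f)) fun _ _ h =>
    (Con.eq _).2 (hf.ybCon_le_comap h)

variable {Y : Type*} {s : Y × Y → Y × Y}

theorem isBraided_prodSol (hbr : IsBraided r) (hbs : IsBraided s) : IsBraided (prodSol r s) := by
  funext ⟨⟨x, a⟩, ⟨y, b⟩, ⟨z, c⟩⟩
  have hX := congrFun hbr (x, y, z)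
  have hY := congrFun hbs (a, b, c)
  simp only [Function.comp_apply, rOneMap, rTwoMap, _root_.prodSol, Prod.mk.injEq] at hX hY ⊢
  exact ⟨⟨hX.1, hY.1⟩, ⟨hX.2.1, hY.2.1⟩, hX.2.2, hY.2.2⟩

theorem prodSol_comp_self (hir : r ∘ r = r) (his : s ∘ s = s) :
    prodSol r s ∘ prodSol r s = prodSol r s := by
  funext ⟨⟨x, a⟩, ⟨y, b⟩⟩
  have hX : r ((r (x, y)).1, (r (x, y)).2) = r (x, y) := congrFun hir (x, y)
  have hY : s ((s (a, b)).1, (s (a, b)).2) = s (a, b) := congrFun his (a, b)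
  simp only [Function.comp_apply, prodSol, hX, hY]

theorem isQuadraticSetHom_fst : IsQuadraticSetHom (prodSol r s) r Prod.fst := fun _ _ => rfl

theorem isQuadraticSetHom_snd : IsQuadraticSetHom (prodSol r s) s Prod.snd := fun _ _ => rfl

variable (r s) in
def segreHom : (ybCon (prodSol r s)).Quotient →* (ybCon r).Quotient × (ybCon s).Quotient :=
  (ybMap isQuadraticSetHom_fst).prod (ybMap isQuadraticSetHom_snd)

theorem segreHom_mk'_ofList (l : List (X × Y)) :
    segreHom r s ((ybCon (prodSol r s)).mk' (FreeMonoid.ofList l)) =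
      ((ybCon r).mk' (FreeMonoid.ofList (l.map Prod.fst)),
        (ybCon s).mk' (FreeMonoid.ofList (l.map Prod.snd))) :=
  rfl

theorem segreHom_injective (hbr : IsBraided r) (hbs : IsBraided s)
    (hir : r ∘ r = r) (his : s ∘ s = s) : Function.Injective (segreHom r s) := by
  intro u v huv
  obtain ⟨a, rfl⟩ := mk'_ofList_surjective _ u
  obtain ⟨b, rfl⟩ := mk'_ofList_surjective _ v
  simp only [segreHom_mk'_ofList, Prod.mk.injEq,
    ybCon_mk'_ofList_eq_iff hbr hir, ybCon_mk'_ofList_eq_iff hbs his] at huv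
  rw [ybCon_mk'_ofList_eq_iff (isBraided_prodSol hbr hbs) (prodSol_comp_self hir his)]
  rw [← isQuadraticSetHom_fst.map_ybNormalForm, ← isQuadraticSetHom_fst.map_ybNormalForm,
    ← isQuadraticSetHom_snd.map_ybNormalForm, ← isQuadraticSetHom_snd.map_ybNormalForm] at huv
  exact (List.zip_of_prod huv.1 huv.2).trans (List.zip_of_prod rfl rfl).symm

theorem apply_mk'_ofList_eq_length (ℓ : (ybCon r).Quotient → ℕ)
    (hone : ∀ x : X, ℓ ((ybCon r).mk' (FreeMonoid.of x)) = 1)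
    (hmul : ∀ a b, ℓ (a * b) = ℓ a + ℓ b) (l : List X) :
    ℓ ((ybCon r).mk' (FreeMonoid.ofList l)) = l.length := by
  induction l with
  | nil => simpa using hmul 1 1
  | cons x l ih =>
    rw [FreeMonoid.ofList_cons, map_mul, hmul, hone, ih, List.length_cons, add_comm]

theorem range_segreHom (ℓX : (ybCon r).Quotient → ℕ)
    (hXone : ∀ x : X, ℓX ((ybCon r).mk' (FreeMonoid.of x)) = 1)
    (hXmul : ∀ a b, ℓX (a * b) = ℓX a + ℓX b)
    (ℓY : (ybCon s).Quotient → ℕ)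
    (hYone : ∀ y : Y, ℓY ((ybCon s).mk' (FreeMonoid.of y)) = 1)
    (hYmul : ∀ a b, ℓY (a * b) = ℓY a + ℓY b) :
    Set.range (segreHom r s) = {p | ℓX p.1 = ℓY p.2} := by
  have hℓX := apply_mk'_ofList_eq_length ℓX hXone hXmul
  have hℓY := apply_mk'_ofList_eq_length ℓY hYone hYmul
  ext ⟨u, v⟩
  obtain ⟨a, rfl⟩ := mk'_ofList_surjective _ u
  obtain ⟨b, rfl⟩ := mk'_ofList_surjective _ v
  simp only [Set.mem_ofPred_eq, hℓX, hℓY]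
  constructor
  · rintro ⟨w, hw⟩
    obtain ⟨l, rfl⟩ := mk'_ofList_surjective _ w
    simp only [segreHom_mk'_ofList, Prod.mk.injEq] at hw
    rw [← hℓX, ← hℓY, ← hw.1, ← hw.2, hℓX, hℓY, List.length_map, List.length_map]
  · intro hab
    refine ⟨(ybCon (prodSol r s)).mk' (FreeMonoid.ofList (a.zip b)), ?_⟩
    rw [segreHom_mk'_ofList, List.map_fst_zip hab.le, List.map_snd_zip hab.ge]

section MonoidAlgebra

open MonoidAlgebra

variable {k M N P : Type*} [CommSemiring k] [Monoid M] [Monoid N] [Monoid P]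

variable (k M N) in
noncomputable def tensorBasis :
    Module.Basis (M × N) k (MonoidAlgebra k M ⊗[k] MonoidAlgebra k N) :=
  (MonoidAlgebra.basis M k).tensorProduct (MonoidAlgebra.basis N k)

theorem tensorBasis_apply (p : M × N) : tensorBasis k M N p = of k M p.1 ⊗ₜ of k N p.2 :=
  Module.Basis.tensorProduct_apply' _ _ p

variable (k M N) in
noncomputable def ofTmulOf : M × N →* MonoidAlgebra k M ⊗[k] MonoidAlgebra k N where
  toFun p := of k M p.1 ⊗ₜ of k N p.2
  map_one' := rfl
  map_mul' _ _ := by simp only [Prod.fst_mul, Prod.snd_mul, map_mul,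
    Algebra.TensorProduct.tmul_mul_tmul]

variable (k) in
noncomputable def liftTmul (f : P →* M × N) :
    MonoidAlgebra k P →ₐ[k] MonoidAlgebra k M ⊗[k] MonoidAlgebra k N :=
  MonoidAlgebra.lift k _ P ((ofTmulOf k M N).comp f)

theorem liftTmul_of (f : P →* M × N) (p : P) :
    liftTmul k f (of k P p) = of k M (f p).1 ⊗ₜ of k N (f p).2 :=
  MonoidAlgebra.lift_of _ p

theorem liftTmul_toLinearMap (f : P →* M × N) :
    (liftTmul k f).toLinearMap = (MonoidAlgebra.basis P k).constr k (tensorBasis k M N ∘ f) :=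
  ((MonoidAlgebra.basis P k).constr_eq k fun p =>
    (tensorBasis_apply (f p)).trans (liftTmul_of f p).symm).symm

theorem liftTmul_injective {f : P →* M × N} (hf : Function.Injective f) :
    Function.Injective (liftTmul k f) := by
  have := (MonoidAlgebra.basis P k).injective_constr_of_linearIndependent (R₂ := k)
    ((tensorBasis k M N).linearIndependent.comp f hf)
  rwa [← liftTmul_toLinearMap] at this

theorem range_liftTmul (f : P →* M × N) :
    Set.range (liftTmul k f) =
      Submodule.span k ((fun p : M × N => of k M p.1 ⊗ₜ[k] of k N p.2) '' Set.range f) := by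
  have := (MonoidAlgebra.basis P k).constr_range k (f := tensorBasis k M N ∘ f)
  rw [← liftTmul_toLinearMap, Set.range_comp] at this
  simp only [funext tensorBasis_apply] at this
  rw [← this]
  rfl

end MonoidAlgebra

end YangBaxter

theorem stmt18_general {X Y : Type*}
    (r : X × X → X × X) (s : Y × Y → Y × Y)
    (hbr : IsBraided r) (hbs : IsBraided s)
    (hir : r ∘ r = r) (his : s ∘ s = s)
    (ℓX : (ybCon r).Quotient → ℕ)
    (hXone : ∀ x : X, ℓX ((ybCon r).mk' (FreeMonoid.of x)) = 1)
    (hXmul : ∀ a b, ℓX (a * b) = ℓX a + ℓX b)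
    (ℓY : (ybCon s).Quotient → ℕ)
    (hYone : ∀ y : Y, ℓY ((ybCon s).mk' (FreeMonoid.of y)) = 1)
    (hYmul : ∀ a b, ℓY (a * b) = ℓY a + ℓY b)
    (k : Type*) [Field k] :
    (∃ seg : (ybCon (prodSol r s)).Quotient →* (ybCon r).Quotient × (ybCon s).Quotient,
      (∀ (x : X) (y : Y), seg ((ybCon (prodSol r s)).mk' (FreeMonoid.of (x, y)))
          = ((ybCon r).mk' (FreeMonoid.of x), (ybCon s).mk' (FreeMonoid.of y))) ∧
      Function.Injective seg ∧
      Set.range seg = {p | ℓX p.1 = ℓY p.2}) ∧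
    (∃ φ : MonoidAlgebra k (ybCon (prodSol r s)).Quotient →ₐ[k]
        (MonoidAlgebra k (ybCon r).Quotient ⊗[k] MonoidAlgebra k (ybCon s).Quotient),
      (∀ (x : X) (y : Y),
        φ (MonoidAlgebra.of k (ybCon (prodSol r s)).Quotient
            ((ybCon (prodSol r s)).mk' (FreeMonoid.of (x, y))))
          = MonoidAlgebra.of k (ybCon r).Quotient ((ybCon r).mk' (FreeMonoid.of x))
            ⊗ₜ[k] MonoidAlgebra.of k (ybCon s).Quotient ((ybCon s).mk' (FreeMonoid.of y))) ∧
      Function.Injective φ ∧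
      Set.range φ = (Submodule.span k
        {a | ∃ u v, ℓX u = ℓY v ∧
          a = MonoidAlgebra.of k (ybCon r).Quotient u
              ⊗ₜ[k] MonoidAlgebra.of k (ybCon s).Quotient v} :
        Submodule k (MonoidAlgebra k (ybCon r).Quotient ⊗[k]
          MonoidAlgebra k (ybCon s).Quotient))) := by
  have hinj := YangBaxter.segreHom_injective hbr hbs hir his
  have hrange := YangBaxter.range_segreHom ℓX hXone hXmul ℓY hYone hYmul
  refine ⟨⟨YangBaxter.segreHom r s, fun _ _ => rfl, hinj, hrange⟩,
    ⟨YangBaxter.liftTmul k (YangBaxter.segreHom r s), fun _ _ => YangBaxter.liftTmul_of _ _,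
      YangBaxter.liftTmul_injective hinj, ?_⟩⟩
  rw [YangBaxter.range_liftTmul, hrange]
  congr 2
  ext a
  simp only [Set.mem_image, Prod.exists, Set.mem_ofPred_eq, eq_comm (a := a)]

/-- Let `(X, r)` and `(Y, s)` be finite left nondegenerate idempotent braided sets, with
length functions `ℓX`, `ℓY` on `S(X, r)`, `S(Y, s)`. Then the assignment
`(x, y) ↦ ([x], [y])` on generators induces a well-defined injective monoid homomorphism
`𝔰 : S(X×Y, r*s) → S(X, r) × S(Y, s)` with image `{(u, v) : ℓX u = ℓY v}`; and for any
field `k` it induces an injective algebra homomorphism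
`A(k, X×Y, r*s) → A(k, X, r) ⊗ A(k, Y, s)` whose image is (the carrier of) the Segre
product `⊕ₘ Aₘ ⊗ Bₘ`, spanned by the `[u] ⊗ [v]` with `ℓX u = ℓY v`. -/
theorem stmt18 {X Y : Type*} [Finite X] [Finite Y]
    (r : X × X → X × X) (s : Y × Y → Y × Y)
    (hbr : IsBraided r) (hbs : IsBraided s)
    (hlndr : ∀ x : X, Function.Bijective fun y => (r (x, y)).1)
    (hlnds : ∀ a : Y, Function.Bijective fun b => (s (a, b)).1)
    (hir : r ∘ r = r) (his : s ∘ s = s)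
    (ℓX : (ybCon r).Quotient → ℕ)
    (hXone : ∀ x : X, ℓX ((ybCon r).mk' (FreeMonoid.of x)) = 1)
    (hXmul : ∀ a b, ℓX (a * b) = ℓX a + ℓX b)
    (ℓY : (ybCon s).Quotient → ℕ)
    (hYone : ∀ y : Y, ℓY ((ybCon s).mk' (FreeMonoid.of y)) = 1)
    (hYmul : ∀ a b, ℓY (a * b) = ℓY a + ℓY b)
    (k : Type*) [Field k] :
    (∃ seg : (ybCon (prodSol r s)).Quotient →* (ybCon r).Quotient × (ybCon s).Quotient,
      (∀ (x : X) (y : Y), seg ((ybCon (prodSol r s)).mk' (FreeMonoid.of (x, y)))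
          = ((ybCon r).mk' (FreeMonoid.of x), (ybCon s).mk' (FreeMonoid.of y))) ∧
      Function.Injective seg ∧
      Set.range seg = {p | ℓX p.1 = ℓY p.2}) ∧
    (∃ φ : MonoidAlgebra k (ybCon (prodSol r s)).Quotient →ₐ[k]
        (MonoidAlgebra k (ybCon r).Quotient ⊗[k] MonoidAlgebra k (ybCon s).Quotient),
      (∀ (x : X) (y : Y),
        φ (MonoidAlgebra.of k (ybCon (prodSol r s)).Quotient
            ((ybCon (prodSol r s)).mk' (FreeMonoid.of (x, y))))
          = MonoidAlgebra.of k (ybCon r).Quotient ((ybCon r).mk' (FreeMonoid.of x))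
            ⊗ₜ[k] MonoidAlgebra.of k (ybCon s).Quotient ((ybCon s).mk' (FreeMonoid.of y))) ∧
      Function.Injective φ ∧
      Set.range φ = (Submodule.span k
        {a | ∃ u v, ℓX u = ℓY v ∧
          a = MonoidAlgebra.of k (ybCon r).Quotient u
              ⊗ₜ[k] MonoidAlgebra.of k (ybCon s).Quotient v} :
        Submodule k (MonoidAlgebra k (ybCon r).Quotient ⊗[k]
          MonoidAlgebra k (ybCon s).Quotient))) :=
  stmt18_general r s hbr hbs hir his ℓX hXone hXmul ℓY hYone hYmul k
end
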